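/- Any board of 8 distinct points in F_3^4 contains at most 8 sets. -/

import Mathlib

/-!
Every point `p` of a board `B` lies in at most `(#B - 1) / 2` sets, because two distinct points
`p, q` lie in exactly one set, namely `{p, q, -(p + q)}`; so the sets through `p` meet
`B \ {p}` in disjoint pairs. Counting incidences between points and sets then gives
`3 · #sets ≤ #B · ((#B - 1) / 2)`, which is `24` for a board of `8` points.
-/

abbrev Pt := Fin 4 → ZMod 3

def numSets (B : Finset Pt) : ℕ :=
  ((B.powersetCard 3).filter (fun S => S.sum id = 0)).card

def IsMagicSquare (B : Finset Pt) : Prop :=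
  ∃ (p : Pt) (V : Submodule (ZMod 3) Pt), Module.finrank (ZMod 3) V = 2 ∧
    (B : Set Pt) = (fun v => p + v) '' (V : Set Pt)

open Finset

namespace Finset

variable {G : Type*} [AddCommGroup G] [DecidableEq G]

def zeroSumTriples (B : Finset G) : Finset (Finset G) :=
  (B.powersetCard 3).filter (fun S => S.sum id = 0)

theorem mem_zeroSumTriples {B S : Finset G} :
    S ∈ zeroSumTriples B ↔ S ⊆ B ∧ #S = 3 ∧ S.sum id = 0 := by
  rw [zeroSumTriples, mem_filter, mem_powersetCard, and_assoc]

theorem eq_insert_insert_neg_add_of_sum_eq_zero {S : Finset G} (hS : #S = 3)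
    (hsum : S.sum id = 0) {p q : G} (hp : p ∈ S) (hq : q ∈ S) (hpq : p ≠ q) :
    S = {p, q, -(p + q)} := by
  have hq' : q ∈ S.erase p := mem_erase.mpr ⟨hpq.symm, hq⟩
  obtain ⟨r, hr⟩ : ∃ r, (S.erase p).erase q = {r} := by
    rw [← card_eq_one, card_erase_of_mem hq', card_erase_of_mem hp, hS]
  have hS_eq : S = {p, q, r} := by
    rw [← hr, insert_erase hq', insert_erase hp]
  have hr_eq : r = -(p + q) := by
    rw [← add_sum_erase S id hp, ← add_sum_erase _ id hq', hr, sum_singleton] at hsum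
    exact eq_neg_of_add_eq_zero_left (by rw [← hsum]; simp only [id]; abel)
  rw [hS_eq, hr_eq]

theorem eq_of_mem_zeroSumTriples {B S T : Finset G} (hS : S ∈ zeroSumTriples B)
    (hT : T ∈ zeroSumTriples B) {p q : G} (hpS : p ∈ S) (hqS : q ∈ S) (hpT : p ∈ T)
    (hqT : q ∈ T) (hpq : p ≠ q) : S = T := by
  obtain ⟨-, hS3, hS0⟩ := mem_zeroSumTriples.mp hS
  obtain ⟨-, hT3, hT0⟩ := mem_zeroSumTriples.mp hT
  rw [eq_insert_insert_neg_add_of_sum_eq_zero hS3 hS0 hpS hqS hpq,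
    eq_insert_insert_neg_add_of_sum_eq_zero hT3 hT0 hpT hqT hpq]

theorem two_mul_card_filter_mem_zeroSumTriples_le {B : Finset G} {p : G} (hp : p ∈ B) :
    2 * #{S ∈ zeroSumTriples B | p ∈ S} ≤ #B - 1 := by
  set T := {S ∈ zeroSumTriples B | p ∈ S}
  have hpairs : ∀ S ∈ T, #((B.erase p).bipartiteAbove (fun S q => q ∈ S) S) = 2 := by
    intro S hS
    obtain ⟨hS, hpS⟩ := mem_filter.mp hS
    obtain ⟨hSB, hS3, -⟩ := mem_zeroSumTriples.mp hS
    rw [bipartiteAbove, filter_mem_eq_inter, erase_inter, inter_eq_right.mpr hSB,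
      card_erase_of_mem hpS, hS3]
  have hunique : ∀ q ∈ B.erase p, #(T.bipartiteBelow (fun S q => q ∈ S) q) ≤ 1 := by
    intro q hq
    refine card_le_one.mpr fun S hS S' hS' => ?_
    simp only [bipartiteBelow, T, mem_filter] at hS hS'
    exact eq_of_mem_zeroSumTriples hS.1.1 hS'.1.1 hS.1.2 hS.2 hS'.1.2 hS'.2
      (mem_erase.mp hq).1.symm
  have := card_mul_le_card_mul _ (fun S hS => (hpairs S hS).ge) hunique
  rw [card_erase_of_mem hp] at this
  omega

theorem three_mul_card_zeroSumTriples_le (B : Finset G) :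
    3 * #(zeroSumTriples B) ≤ #B * ((#B - 1) / 2) := by
  have htriple : ∀ S ∈ zeroSumTriples B, #(B.bipartiteAbove (fun S p => p ∈ S) S) = 3 := by
    intro S hS
    obtain ⟨hSB, hS3, -⟩ := mem_zeroSumTriples.mp hS
    rw [bipartiteAbove, filter_mem_eq_inter, inter_eq_right.mpr hSB, hS3]
  have hpoint : ∀ p ∈ B,
      #((zeroSumTriples B).bipartiteBelow (fun S p => p ∈ S) p) ≤ (#B - 1) / 2 := fun p hp =>
    (Nat.le_div_iff_mul_le two_pos).mpr <| by
      rw [mul_comm]; exact two_mul_card_filter_mem_zeroSumTriples_le hp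
  rw [mul_comm]
  exact card_mul_le_card_mul _ (fun S hS => (htriple S hS).ge) hpoint

end Finset

theorem stmt12 (B : Finset Pt) (hB : B.card = 8) : numSets B ≤ 8 := by
  have h := three_mul_card_zeroSumTriples_le B
  rw [hB] at h
  have hnum : numSets B = #(zeroSumTriples B) := rfl
  omega
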